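/- The schema ∼φ → ¬φ is not valid in BK: there exist an Odintsov–Wansing model and a state in it that does not verify ∼p → ¬p for an atomic formula p. -/

import Mathlib

inductive BKForm : Type where
  | atom : ℕ → BKForm
  | bot  : BKForm
  | snot : BKForm → BKForm
  | and  : BKForm → BKForm → BKForm
  | or   : BKForm → BKForm → BKForm
  | imp  : BKForm → BKForm → BKForm
  | box  : BKForm → BKForm
  | dia  : BKForm → BKForm

def BKForm.neg (φ : BKForm) : BKForm := .imp φ .bot

def BKForm.biimp (φ ψ : BKForm) : BKForm := .and (.imp φ ψ) (.imp ψ φ)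

structure OWModel : Type 1 where
  S : Type
  ne : Nonempty S
  R : S → S → Prop
  Vp : ℕ → S → Prop
  Vm : ℕ → S → Prop

mutual
def verify (M : OWModel) : M.S → BKForm → Prop
  | x, .atom p => M.Vp p x
  | _, .bot => False
  | x, .snot φ => falsify M x φ
  | x, .and φ ψ => verify M x φ ∧ verify M x ψ
  | x, .or φ ψ => verify M x φ ∨ verify M x ψ
  | x, .imp φ ψ => verify M x φ → verify M x ψ
  | x, .box φ => ∀ y, M.R x y → verify M y φ
  | x, .dia φ => ∃ y, M.R x y ∧ verify M y φ
def falsify (M : OWModel) : M.S → BKForm → Prop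
  | x, .atom p => M.Vm p x
  | _, .bot => True
  | x, .snot φ => verify M x φ
  | x, .and φ ψ => falsify M x φ ∨ falsify M x ψ
  | x, .or φ ψ => falsify M x φ ∧ falsify M x ψ
  | x, .imp φ ψ => verify M x φ ∧ falsify M x ψ
  | x, .box φ => ∃ y, M.R x y ∧ falsify M y φ
  | x, .dia φ => ∀ y, M.R x y → falsify M y φ
end

def BKvalid (φ : BKForm) : Prop := ∀ (M : OWModel) (x : M.S), verify M x φ

theorem not_verify_snot_imp_neg_of_glut {M : OWModel} {x : M.S} {φ : BKForm}
    (hv : verify M x φ) (hf : falsify M x φ) :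
    ¬ verify M x (.imp (.snot φ) φ.neg) :=
  fun h => h hf hv

def gluttedPointModel : OWModel where
  S := Unit
  ne := ⟨()⟩
  R _ _ := True
  Vp _ _ := True
  Vm _ _ := True

theorem stmt2 : ∃ (M : OWModel) (x : M.S) (p : ℕ),
    ¬ verify M x (.imp (.snot (.atom p)) (BKForm.neg (.atom p))) :=
  ⟨gluttedPointModel, (), 0,
    not_verify_snot_imp_neg_of_glut trivial trivial⟩
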